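/- Let σ be a permutation of {1,…,n}. If T(σ) contains an occurrence of the pattern 132, then either σ contains an occurrence of the pattern 2431, or σ contains an occurrence of the barred pattern 241-5̄-3, i.e. there exist values a < b < c < d occurring in σ in the order b, d, a, c such that no value e > d occurs in σ between a and c. -/

import Mathlib

private theorem length_takeWhile_ne_lt {w : List ℕ} {m : ℕ} (hm : m ∈ w) :
    (w.takeWhile (· ≠ m)).length < w.length := by
  induction w with
  | nil => cases hm
  | cons a as ih =>
    by_cases ha : a = m
    · subst ha
      simp [List.takeWhile_cons]
    · rw [List.takeWhile_cons_of_pos (by simpa using ha)]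
      have hm' : m ∈ as := by
        rcases List.mem_cons.mp hm with h | h
        · exact absurd h.symm ha
        · exact h
      simpa using Nat.succ_lt_succ (ih hm')

private theorem length_tail_dropWhile_lt {w : List ℕ} (hw : w ≠ []) (p : ℕ → Bool) :
    ((w.dropWhile p).tail).length < w.length := by
  cases hd : w.dropWhile p with
  | nil => simpa using List.length_pos_iff.mpr hw
  | cons x xs =>
    have h1 : (x :: xs).length ≤ w.length := by
      rw [← hd]; exact (List.dropWhile_sublist p).length_le
    simp only [List.tail_cons]
    exact lt_of_lt_of_le (by simp) h1

/-- The classical stack sort operator on words: `S(ε) = ε` and `S(L m R) = S(L) S(R) m`,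
where `m` is the largest entry of the word `L m R`. -/
def stackSort : List ℕ → List ℕ
  | [] => []
  | a :: as =>
    let m := ((a :: as).max?).getD 0
    stackSort ((a :: as).takeWhile (· ≠ m)) ++
      stackSort (((a :: as).dropWhile (· ≠ m)).tail) ++ [m]
termination_by w => w.length
decreasing_by
  · refine length_takeWhile_ne_lt ?_
    have : (a :: as).max? = some (((a :: as).max?).getD 0) := by
      cases h : (a :: as).max? with
      | none => simp [List.max?_eq_none_iff] at h
      | some b => simp
    exact List.max?_mem this
  · exact length_tail_dropWhile_lt (by simp) _

/-- The revstack sort operator `T = S ∘ rev`. -/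
def revstackSort (w : List ℕ) : List ℕ := stackSort w.reverse

/-- The word of the identity permutation of `{1,…,n}`, namely `1 2 ⋯ n`. -/
def idPerm (n : ℕ) : List ℕ := List.range' 1 n

/-- `w` is (the word of) a permutation of `{1,…,n}`. -/
def IsPermWord (n : ℕ) (w : List ℕ) : Prop := w.Perm (idPerm n)

/-- `x` precedes `y` in the word `w`, i.e. the position of `x` is smaller than that of `y`. -/
def Precedes (w : List ℕ) (x y : ℕ) : Prop := w.idxOf x < w.idxOf y

/-- `w` contains an occurrence of the pattern `132`: values `a < b < c` occurring in
the order `a, c, b`. -/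
def Contains132 (w : List ℕ) : Prop :=
  ∃ a b c, a ∈ w ∧ b ∈ w ∧ c ∈ w ∧ a < b ∧ b < c ∧ Precedes w a c ∧ Precedes w c b

/-- `w` contains an occurrence of the pattern `2431`: values `a < b < c < d` occurring in
the order `b, d, c, a`. -/
def Contains2431 (w : List ℕ) : Prop :=
  ∃ a b c d, a ∈ w ∧ b ∈ w ∧ c ∈ w ∧ d ∈ w ∧ a < b ∧ b < c ∧ c < d ∧
    Precedes w b d ∧ Precedes w d c ∧ Precedes w c a

/-- `w` contains an occurrence of the barred pattern `241 5̄ 3`: values `a < b < c < d`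
occurring in the order `b, d, a, c` with no value `e > d` lying between `a` and `c` in `w`. -/
def ContainsBarred24153 (w : List ℕ) : Prop :=
  ∃ a b c d, a ∈ w ∧ b ∈ w ∧ c ∈ w ∧ d ∈ w ∧ a < b ∧ b < c ∧ c < d ∧
    Precedes w b d ∧ Precedes w d a ∧ Precedes w a c ∧
    ¬ ∃ e, e ∈ w ∧ d < e ∧ Precedes w a e ∧ Precedes w e c

/-- The number of descents of a word. -/
def des (w : List ℕ) : ℕ := ((w.zip w.tail).filter (fun p => p.2 < p.1)).length

/-- The finset of all words of permutations of `{1,…,n}`. -/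
def permsOf (n : ℕ) : Finset (List ℕ) := (idPerm n).permutations.toFinset

/-- The finset of `t`-revstack sortable permutations of `{1,…,n}`. -/
def revstackSortable (n t : ℕ) : Finset (List ℕ) :=
  (permsOf n).filter (fun w => revstackSort^[t] w = idPerm n)

/-- The finset of `t`-stack sortable permutations of `{1,…,n}`. -/
def stackSortable (n t : ℕ) : Finset (List ℕ) :=
  (permsOf n).filter (fun w => stackSort^[t] w = idPerm n)

/-- The descent polynomial `W(A;x) = ∑_{π ∈ A} x^{1+des(π)}` of a set of permutations. -/
noncomputable def descPoly (A : Finset (List ℕ)) : Polynomial ℚ :=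
  ∑ w ∈ A, Polynomial.X ^ (1 + des w)

/-- The `m`-th Eulerian polynomial `A_m(x) = ∑_{π ∈ S_m} x^{1+des(π)}`, with `A_0(x) = 1`. -/
noncomputable def eulerianPoly (m : ℕ) : Polynomial ℚ :=
  if m = 0 then 1 else descPoly (permsOf m)

/-- `v_t(n,i)`: the number of `t`-revstack sortable permutations of `{1,…,n}`
with exactly `i` descents. -/
def vNum (t n i : ℕ) : ℕ := ((revstackSortable n t).filter (fun w => des w = i)).card

/-- `w_t(n,i)`: the number of `t`-stack sortable permutations of `{1,…,n}`
with exactly `i` descents. -/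
def wNum (t n i : ℕ) : ℕ := ((stackSortable n t).filter (fun w => des w = i)).card

/-! Write `T(σ) = S(σ.reverse)` and argue about stack sorting by induction along
`S(L m R) = S(L) S(R) m`. Two facts about a word `w` follow. If `z < x` and `x` precedes `z` in
`S(w)`, then some `e > x` lies between `x` and `z` in `w`. If `z` precedes `x` in `w` (distinct
entries) but `x` precedes `z` in `S(w)`, then every entry between them in `w` is smaller than `z`,
since a larger one would pop `z` before `x` is pushed.

Let `a < b < c` occur as `a, c, b` in `T(σ)`. The first fact, read in `σ.reverse`, gives `e > c`
with `b, e, c` in this order in `σ`. If `c` precedes `a` in `σ`, then `b e c a` is a `2431`.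
Otherwise the second fact says nothing larger than `c` lies between `a` and `c`; so `e` precedes
`a`, and `b e a c` is a `241 5̄ 3` whose bar is respected.

"`x` before `y`" is handled as `[x, y] <+ w`, which, unlike `Precedes` (defined through
`idxOf`), behaves well under `++` and `reverse`. -/

open List

namespace List

variable {α : Type*} {x y : α} {A B : List α}

theorem pair_sublist_append_iff :
    [x, y] <+ A ++ B ↔ [x, y] <+ A ∨ (x ∈ A ∧ y ∈ B) ∨ [x, y] <+ B := by
  constructor
  · intro h
    obtain ⟨l₁, l₂, hl, h₁, h₂⟩ := sublist_append_iff.mp h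
    match l₁, l₂, hl with
    | [], _, rfl => exact Or.inr (Or.inr h₂)
    | [_], [_], rfl => exact Or.inr (Or.inl ⟨singleton_sublist.mp h₁, singleton_sublist.mp h₂⟩)
    | [_, _], [], rfl => exact Or.inl h₁
  · rintro (h | ⟨hx, hy⟩ | h)
    · exact h.trans (sublist_append_left A B)
    · exact (singleton_sublist.mpr hx).append (singleton_sublist.mpr hy)
    · exact h.trans (sublist_append_right A B)

theorem pair_sublist_left_of_sublist_append (hy : y ∉ B) (h : [x, y] <+ A ++ B) :
    [x, y] <+ A := by
  rcases pair_sublist_append_iff.mp h with h | ⟨-, hy'⟩ | h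
  · exact h
  · exact absurd hy' hy
  · exact absurd (h.subset (by simp)) hy

theorem pair_sublist_right_of_sublist_append (hx : x ∉ A) (h : [x, y] <+ A ++ B) :
    [x, y] <+ B := by
  rcases pair_sublist_append_iff.mp h with h | ⟨hx', -⟩ | h
  · exact absurd (h.subset (by simp)) hx
  · exact absurd hx' hx
  · exact h

theorem exists_eq_append_cons_max {α : Type*} [LinearOrder α] {w : List α} (hw : w ≠ []) :
    ∃ L m R, w = L ++ m :: R ∧ m ∉ L ∧ ∀ x ∈ w, x ≤ m := by
  obtain ⟨m, hm⟩ := Option.ne_none_iff_exists'.mp (max?_eq_none_iff.not.mpr hw)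
  obtain ⟨hmw, hmax⟩ := max?_eq_some_iff.mp hm
  obtain ⟨L, R, rfl, hmL⟩ := eq_append_cons_of_mem hmw
  exact ⟨L, m, R, rfl, hmL, hmax⟩

end List

theorem precedes_iff_pair_sublist {l : List ℕ} (hl : l.Nodup) {x y : ℕ} (hy : y ∈ l) :
    Precedes l x y ↔ [x, y] <+ l := by
  induction l with
  | nil => simp at hy
  | cons a l ih =>
    obtain ⟨hal, hl⟩ := nodup_cons.mp hl
    unfold Precedes at ih ⊢
    rcases eq_or_ne a y with rfl | hay
    · rw [idxOf_cons_self, sublist_cons_iff]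
      simp only [Nat.not_lt_zero, cons.injEq, false_iff, not_or, not_exists, not_and]
      exact ⟨fun h => hal (h.subset (by simp)), by simp [hal]⟩
    have hyl : y ∈ l := (mem_cons.mp hy).resolve_left hay.symm
    rw [idxOf_cons_ne _ hay, sublist_cons_iff]
    rcases eq_or_ne a x with rfl | hax
    · simp [hyl]
    · simp [idxOf_cons_ne _ hax, ih hl hyl, hax.symm]

theorem precedes_or_precedes {l : List ℕ} {x y : ℕ} (hx : x ∈ l) (hxy : x ≠ y) :
    Precedes l x y ∨ Precedes l y x := by
  have := (idxOf_inj hx).not.mpr hxy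
  unfold Precedes
  omega

theorem stackSort_append_cons {L R : List ℕ} {m : ℕ} (hmL : m ∉ L)
    (hmax : ∀ x ∈ L ++ m :: R, x ≤ m) :
    stackSort (L ++ m :: R) = stackSort L ++ stackSort R ++ [m] := by
  obtain ⟨a, as, hw⟩ := exists_cons_of_ne_nil (append_ne_nil_of_right_ne_nil L (cons_ne_nil m R))
  have hmax? : (L ++ m :: R).max? = some m := max?_eq_some_iff.mpr ⟨by simp, hmax⟩
  have hne : ∀ x ∈ L, (!decide (x = m)) = true := fun x hx => by
    simpa using ne_of_mem_of_not_mem hx hmL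
  rw [hw, stackSort, ← hw, hmax?]
  simp [takeWhile_append_of_pos hne, dropWhile_append_of_pos hne]

@[elab_as_elim]
theorem stackSort_induction {motive : List ℕ → Prop} (nil : motive [])
    (append_cons : ∀ L m R, m ∉ L → (∀ x ∈ L ++ m :: R, x ≤ m) → motive L → motive R →
      motive (L ++ m :: R))
    (w : List ℕ) : motive w := by
  induction hn : w.length using Nat.strong_induction_on generalizing w with
  | _ n ih =>
    rcases eq_or_ne w [] with rfl | hw
    · exact nil
    obtain ⟨L, m, R, rfl, hmL, hmax⟩ := exists_eq_append_cons_max hw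
    have hlen : L.length + R.length < n := by simp at hn; omega
    exact append_cons L m R hmL hmax (ih _ (by omega) L rfl) (ih _ (by omega) R rfl)

theorem stackSort_perm (w : List ℕ) : (stackSort w).Perm w := by
  induction w using stackSort_induction with
  | nil => simp [stackSort]
  | append_cons L m R hmL hmax ihL ihR =>
    rw [stackSort_append_cons hmL hmax, append_assoc]
    exact ihL.append ((ihR.append_right [m]).trans (perm_append_comm))

theorem mem_stackSort {w : List ℕ} {x : ℕ} : x ∈ stackSort w ↔ x ∈ w :=
  (stackSort_perm w).mem_iff

theorem pair_sublist_stackSort_append_cons {L R : List ℕ} {m x y : ℕ} (hmL : m ∉ L)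
    (hmax : ∀ x ∈ L ++ m :: R, x ≤ m) (h : [x, y] <+ stackSort (L ++ m :: R)) :
    [x, y] <+ stackSort L ∨ [x, y] <+ stackSort R ∨ (x ∈ L ∧ y ∈ R) ∨ y = m := by
  rw [stackSort_append_cons hmL hmax, append_assoc] at h
  rcases pair_sublist_append_iff.mp h with h | ⟨hx, hy⟩ | h
  · exact Or.inl h
  · rcases mem_append.mp hy with hy | hy
    · exact Or.inr (Or.inr (Or.inl ⟨mem_stackSort.mp hx, mem_stackSort.mp hy⟩))
    · exact Or.inr (Or.inr (Or.inr (mem_singleton.mp hy)))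
  · rcases pair_sublist_append_iff.mp h with h | ⟨-, hy⟩ | h
    · exact Or.inr (Or.inl h)
    · exact Or.inr (Or.inr (Or.inr (mem_singleton.mp hy)))
    · exact absurd h.length_le (by simp)

theorem exists_gt_between_of_pair_sublist_stackSort {w : List ℕ} {x z : ℕ} (hzx : z < x)
    (h : [x, z] <+ stackSort w) : ∃ e, x < e ∧ [x, e, z] <+ w := by
  induction w using stackSort_induction with
  | nil => simp [stackSort] at h
  | append_cons L m R hmL hmax ihL ihR =>
    rcases pair_sublist_stackSort_append_cons hmL hmax h with h | h | ⟨hx, hz⟩ | rfl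
    · obtain ⟨e, hxe, he⟩ := ihL h
      exact ⟨e, hxe, he.trans (sublist_append_left L _)⟩
    · obtain ⟨e, hxe, he⟩ := ihR h
      exact ⟨e, hxe, he.trans ((sublist_cons_self m R).trans (sublist_append_right L _))⟩
    · have hxm : x < m := (hmax x (by simp [hx])).lt_of_ne (ne_of_mem_of_not_mem hx hmL)
      exact ⟨m, hxm, (singleton_sublist.mpr hx).append ((singleton_sublist.mpr hz).cons_cons m)⟩
    · exact absurd (hmax x (mem_stackSort.mp (h.subset (by simp)))) (not_le.mpr hzx)

theorem lt_of_pair_sublist_stackSort {w : List ℕ} (hw : w.Nodup) {x z f : ℕ}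
    (h : [x, z] <+ stackSort w) (hzf : [z, f] <+ w) (hfx : [f, x] <+ w) : f < z := by
  induction w using stackSort_induction with
  | nil => simp [stackSort] at h
  | append_cons L m R hmL hmax ihL ihR =>
    obtain ⟨hwL, hwmR, hdisj⟩ := nodup_append.mp hw
    have hwR : R.Nodup := (nodup_cons.mp hwmR).2
    have hLmR : ∀ a ∈ L, a ∉ m :: R := fun a ha ha' => hdisj a ha a ha' rfl
    have hRLm : ∀ a ∈ R, a ∉ L ++ [m] := fun a ha ha' =>
      (nodup_append.mp (append_cons L m R ▸ hw)).2.2 a ha' a ha rfl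
    rcases pair_sublist_stackSort_append_cons hmL hmax h with h | h | ⟨hxL, hzR⟩ | rfl
    · have hxL : x ∈ L := mem_stackSort.mp (h.subset (by simp))
      have hfx' := pair_sublist_left_of_sublist_append (hLmR x hxL) hfx
      have hfL : f ∈ L := hfx'.subset (by simp)
      exact ihL hwL h (pair_sublist_left_of_sublist_append (hLmR f hfL) hzf) hfx'
    · rw [append_cons] at hzf hfx
      have hzR : z ∈ R := mem_stackSort.mp (h.subset (by simp))
      have hzf' := pair_sublist_right_of_sublist_append (hRLm z hzR) hzf
      have hfR : f ∈ R := hzf'.subset (by simp)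
      exact ihR hwR h hzf' (pair_sublist_right_of_sublist_append (hRLm f hfR) hfx)
    · rw [append_cons] at hzf hfx
      have hzf' := pair_sublist_right_of_sublist_append (hRLm z hzR) hzf
      have hfR : f ∈ R := hzf'.subset (by simp)
      have hxR : x ∈ R := (pair_sublist_right_of_sublist_append (hRLm f hfR) hfx).subset (by simp)
      exact absurd (mem_cons_of_mem m hxR) (hLmR x hxL)
    · have hfz : f ≠ z := by simpa [eq_comm] using hzf.nodup hw
      exact (hmax f (hfx.subset (by simp))).lt_of_ne hfz

theorem nodup_revstackSort {σ : List ℕ} (hσ : σ.Nodup) : (revstackSort σ).Nodup :=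
  (stackSort_perm σ.reverse).nodup_iff.mpr (nodup_reverse.mpr hσ)

theorem mem_revstackSort {σ : List ℕ} {x : ℕ} : x ∈ revstackSort σ ↔ x ∈ σ :=
  mem_stackSort.trans mem_reverse

theorem exists_gt_between_of_precedes_revstackSort {σ : List ℕ} (hσ : σ.Nodup) {x z : ℕ}
    (hzx : z < x) (hz : z ∈ σ) (h : Precedes (revstackSort σ) x z) :
    ∃ e ∈ σ, x < e ∧ Precedes σ z e ∧ Precedes σ e x := by
  rw [precedes_iff_pair_sublist (nodup_revstackSort hσ) (mem_revstackSort.mpr hz)] at h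
  obtain ⟨e, hxe, hsub⟩ := exists_gt_between_of_pair_sublist_stackSort hzx h
  replace hsub : [z, e, x] <+ σ := by simpa using sublist_reverse_iff.mp hsub
  have he : e ∈ σ := hsub.subset (by simp)
  refine ⟨e, he, hxe, ?_, ?_⟩
  · exact (precedes_iff_pair_sublist hσ he).mpr ((sublist_append_left [z, e] [x]).trans hsub)
  · exact (precedes_iff_pair_sublist hσ (hsub.subset (by simp))).mpr
      ((sublist_cons_self z [e, x]).trans hsub)

theorem lt_of_precedes_revstackSort {σ : List ℕ} (hσ : σ.Nodup) {x z f : ℕ} (hz : z ∈ σ)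
    (h : Precedes (revstackSort σ) x z) (hf : f ∈ σ) (hxf : Precedes σ x f)
    (hfz : Precedes σ f z) : f < z := by
  rw [precedes_iff_pair_sublist (nodup_revstackSort hσ) (mem_revstackSort.mpr hz)] at h
  rw [precedes_iff_pair_sublist hσ hf] at hxf
  rw [precedes_iff_pair_sublist hσ hz] at hfz
  exact lt_of_pair_sublist_stackSort (nodup_reverse.mpr hσ) h
    (sublist_reverse_iff.mpr (by simpa using hfz)) (sublist_reverse_iff.mpr (by simpa using hxf))

theorem revstack_132_implies_2431_or_24153bar
    (n : ℕ) (σ : List ℕ) (hσ : IsPermWord n σ)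
    (h : Contains132 (revstackSort σ)) :
    Contains2431 σ ∨ ContainsBarred24153 σ := by
  have hnd : σ.Nodup := hσ.nodup_iff.mpr nodup_range'
  obtain ⟨a, b, c, ha, hb, hc, hab, hbc, hac, hcb⟩ := h
  rw [mem_revstackSort] at ha hb hc
  obtain ⟨e, he, hce, hbe, hec⟩ := exists_gt_between_of_precedes_revstackSort hnd hbc hb hcb
  rcases precedes_or_precedes ha (hab.trans hbc).ne with hac' | hca
  · have hbetween : ∀ f ∈ σ, Precedes σ a f → Precedes σ f c → f < c :=
      fun f hf => lt_of_precedes_revstackSort hnd hc hac hf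
    have hea : Precedes σ e a := (precedes_or_precedes he (by omega)).resolve_right
      fun hae => (hbetween e he hae hec).not_gt hce
    refine Or.inr ⟨a, b, c, e, ha, hb, hc, he, hab, hbc, hce, hbe, hea, hac', ?_⟩
    rintro ⟨f, hf, hef, haf, hfc⟩
    exact (hbetween f hf haf hfc).not_gt (hce.trans hef)
  · exact Or.inl ⟨a, b, c, e, ha, hb, hc, he, hab, hbc, hce, hbe, hec, hca⟩
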